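/- Let λ ⊆ μ be partitions and s ≥ 1 an integer. Then μ∖λ is a border strip of size s if and only if there exists c ∈ ℤ such that m(λ)(c−1) = +1, m(λ)(c+s−1) = −1, m(μ)(c−1) = −1, m(μ)(c+s−1) = +1, and m(μ)(j) = m(λ)(j) for every j ∉ {c−1, c+s−1}. In that case the contents of the nodes of μ∖λ are exactly the integers c, c+1, …, c+s−1, each occurring for exactly one node of μ∖λ. -/

import Mathlib

/-- A partition: a weakly decreasing, eventually zero sequence of naturals;
`part k` is the `(k+1)`-st part `λ_{k+1}`. -/
structure NatSeqPartition where
  part : ℕ → ℕ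
  antitone : ∀ a b : ℕ, a ≤ b → part b ≤ part a
  eventually_zero : ∃ N, ∀ n, N ≤ n → part n = 0

namespace Wreath

attribute [local instance] Classical.propDecidable

/-- The conjugate partition: `conj lam a = ᵗλ_a` for `a ≥ 1`. -/
noncomputable def conj (lam : NatSeqPartition) (a : ℕ) : ℕ :=
  Set.ncard {k : ℕ | a ≤ lam.part k}

/-- The Maya diagram of a partition: value `+1` at `j` iff `j = ᵗλ_a − a` for some `a ≥ 1`. -/
noncomputable def mayaFun (lam : NatSeqPartition) : ℤ → ℤ := fun j =>
  if ∃ a : ℕ, j = (conj lam (a + 1) : ℤ) - (a + 1 : ℤ) then 1 else -1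

/-- `f : ℤ → ℤ` is a Maya diagram: values `±1`, eventually `-1` to the right (large `j`),
eventually `+1` to the left (small `j`). -/
def IsMayaFun (f : ℤ → ℤ) : Prop :=
  (∀ j, f j = 1 ∨ f j = -1) ∧ (∃ N : ℤ, ∀ j, N ≤ j → f j = -1) ∧
    (∃ N : ℤ, ∀ j, j ≤ N → f j = 1)

/-- The charge `#{j < 0 : f j = −1} − #{j ≥ 0 : f j = 1}`. -/
noncomputable def chargeFun (f : ℤ → ℤ) : ℤ :=
  (Set.ncard {j : ℤ | j < 0 ∧ f j = -1} : ℤ) - (Set.ncard {j : ℤ | 0 ≤ j ∧ f j = 1} : ℤ)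

def emptyPartition : NatSeqPartition :=
  ⟨fun _ => 0, fun _ _ _ => le_rfl, ⟨0, fun _ _ => rfl⟩⟩

/-- The partition whose Maya diagram is `f` (junk value if there is none). -/
noncomputable def partitionOfMaya (f : ℤ → ℤ) : NatSeqPartition :=
  if h : ∃ lam : NatSeqPartition, mayaFun lam = f then h.choose else emptyPartition

/-- The charge `c_i(λ)` of the `i`-th quotient Maya diagram `j ↦ m(λ)(i + jℓ)`. -/
noncomputable def chargeQuot (ℓ : ℕ) (lam : NatSeqPartition) (i : ℤ) : ℤ :=
  chargeFun fun j => mayaFun lam (i + j * (ℓ : ℤ))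

/-- The `i`-th quotient component `λ^i`: the partition whose Maya diagram is
`j ↦ m_i(λ)(j − c_i(λ))`. -/
noncomputable def quotComp (ℓ : ℕ) (lam : NatSeqPartition) (i : ℤ) : NatSeqPartition :=
  partitionOfMaya fun j => mayaFun lam (i + (j - chargeQuot ℓ lam i) * (ℓ : ℤ))

/-- The `ℓ`-core of `λ`: the partition whose Maya diagram has value `−1` at `i + jℓ`
(`0 ≤ i < ℓ`) exactly when `j ≥ −c_i(λ)`. -/
noncomputable def coreOf (ℓ : ℕ) (lam : NatSeqPartition) : NatSeqPartition :=
  partitionOfMaya fun j =>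
    if -(chargeQuot ℓ lam (Int.emod j (ℓ : ℤ))) ≤ Int.ediv j (ℓ : ℤ) then -1 else 1

/-- Membership of the node `x = (a,b)` in the Young diagram of `lam`:
`1 ≤ a`, `1 ≤ b`, `a ≤ λ_b`.  The content of `(a,b)` is `b − a`. -/
def NatSeqPartition.memYD (lam : NatSeqPartition) (x : ℤ × ℤ) : Prop :=
  1 ≤ x.1 ∧ 1 ≤ x.2 ∧ x.1 ≤ (lam.part (x.2 - 1).toNat : ℤ)

/-- Containment of Young diagrams. -/
def Sub (lam mu : NatSeqPartition) : Prop := ∀ x, NatSeqPartition.memYD lam x → NatSeqPartition.memYD mu x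

/-- Membership in the skew diagram `μ∖λ`. -/
def SkewMem (lam mu : NatSeqPartition) (x : ℤ × ℤ) : Prop :=
  NatSeqPartition.memYD mu x ∧ ¬ NatSeqPartition.memYD lam x

/-- The number of nodes of `μ∖λ`. -/
noncomputable def skewSize (lam mu : NatSeqPartition) : ℕ := Set.ncard {x | SkewMem lam mu x}

/-- The size `|λ|`. -/
noncomputable def NatSeqPartition.size (lam : NatSeqPartition) : ℕ := Set.ncard {x | NatSeqPartition.memYD lam x}

/-- Edge-adjacency of nodes. -/
def adjacent (x y : ℤ × ℤ) : Prop :=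
  (x.1 = y.1 ∧ (x.2 = y.2 + 1 ∨ y.2 = x.2 + 1)) ∨
  (x.2 = y.2 ∧ (x.1 = y.1 + 1 ∨ y.1 = x.1 + 1))

/-- `μ∖λ` is a border strip: `λ ⊆ μ`, nonempty, connected through edge-adjacent nodes,
and containing no 2×2 block. -/
def IsBorderStrip (lam mu : NatSeqPartition) : Prop :=
  Sub lam mu ∧ (∃ x, SkewMem lam mu x) ∧
  (∀ x y, SkewMem lam mu x → SkewMem lam mu y →
    Relation.ReflTransGen (fun u v => SkewMem lam mu u ∧ SkewMem lam mu v ∧ adjacent u v) x y) ∧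
  ¬ ∃ a b : ℤ, SkewMem lam mu (a, b) ∧ SkewMem lam mu (a + 1, b) ∧
      SkewMem lam mu (a, b + 1) ∧ SkewMem lam mu (a + 1, b + 1)

/-- An `ℓ`-core: a partition from which no border strip of `ℓ` nodes can be removed. -/
def IsCore (ℓ : ℕ) (lam : NatSeqPartition) : Prop :=
  ¬ ∃ mu : NatSeqPartition, IsBorderStrip mu lam ∧ skewSize mu lam = ℓ

/-- Dominance order (on partitions of the same size): `Dom μ λ` means `μ ⊴ λ`. -/
def Dom (mu lam : NatSeqPartition) : Prop :=
  NatSeqPartition.size mu = NatSeqPartition.size lam ∧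
  ∀ k : ℕ, ∑ b ∈ Finset.range k, mu.part b ≤ ∑ b ∈ Finset.range k, lam.part b

/-- `x` is the node of `μ∖λ` of largest content (the initial node of a strip). -/
def IsMaxContentNode (lam mu : NatSeqPartition) (x : ℤ × ℤ) : Prop :=
  SkewMem lam mu x ∧ ∀ y, SkewMem lam mu y → y.2 - y.1 ≤ x.2 - x.1

/-- `x` is the node of `μ∖λ` of smallest content (the final node of a strip). -/
def IsMinContentNode (lam mu : NatSeqPartition) (x : ℤ × ℤ) : Prop :=
  SkewMem lam mu x ∧ ∀ y, SkewMem lam mu y → x.2 - x.1 ≤ y.2 - y.1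

/-- Add `1` to each of the first `k` parts (append a column of height `k`). -/
def addColParts (k : ℕ) (f : ℕ → ℕ) : ℕ → ℕ := fun r => if r < k then f r + 1 else f r

/-- The number of (nonzero) rows of a partition. -/
noncomputable def numRows (nu : NatSeqPartition) : ℕ := Set.ncard {r : ℕ | 0 < nu.part r}

/-- Append a new final row of length `k` after `len` rows. -/
def addRowParts (k len : ℕ) (f : ℕ → ℕ) : ℕ → ℕ :=
  fun r => if r < len then f r else if r = len then k else 0

/-- One column-addition step: `μ` is obtained from `ν` by adding, in component `i` of the
`ℓ`-quotient, a new column of height `k` no taller than any existing column. -/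
def IsColStep (ℓ : ℕ) (nu mu : NatSeqPartition) (i k : ℕ) : Prop :=
  i < ℓ ∧ 1 ≤ k ∧
  (∀ a : ℕ, 1 ≤ a → (a : ℕ) ≤ (quotComp ℓ nu (i : ℤ)).part 0 →
    k ≤ conj (quotComp ℓ nu (i : ℤ)) a) ∧
  coreOf ℓ mu = coreOf ℓ nu ∧
  (∀ i' : ℕ, i' < ℓ → i' ≠ i → quotComp ℓ mu (i' : ℤ) = quotComp ℓ nu (i' : ℤ)) ∧
  (quotComp ℓ mu (i : ℤ)).part = addColParts k ((quotComp ℓ nu (i : ℤ)).part)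

/-- One row-addition step: `μ` is obtained from `ν` by adding, in component `i` of the
`ℓ`-quotient, a new final row of length `k` no longer than any existing row. -/
def IsRowStep (ℓ : ℕ) (nu mu : NatSeqPartition) (i k : ℕ) : Prop :=
  i < ℓ ∧ 1 ≤ k ∧
  (∀ r : ℕ, 0 < (quotComp ℓ nu (i : ℤ)).part r → k ≤ (quotComp ℓ nu (i : ℤ)).part r) ∧
  coreOf ℓ mu = coreOf ℓ nu ∧
  (∀ i' : ℕ, i' < ℓ → i' ≠ i → quotComp ℓ mu (i' : ℤ) = quotComp ℓ nu (i' : ℤ)) ∧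
  (quotComp ℓ mu (i : ℤ)).part =
    addRowParts k (numRows (quotComp ℓ nu (i : ℤ))) ((quotComp ℓ nu (i : ℤ)).part)

/-- A column-addition sequence for `λ`. -/
def IsColSeq (ℓ : ℕ) (lam : NatSeqPartition) (N : ℕ) (seq : ℕ → NatSeqPartition) : Prop :=
  seq 0 = coreOf ℓ lam ∧ seq N = lam ∧
  ∀ t, t < N → ∃ i k, IsColStep ℓ (seq t) (seq (t + 1)) i k

/-- A row-addition sequence for `λ`. -/
def IsRowSeq (ℓ : ℕ) (lam : NatSeqPartition) (N : ℕ) (seq : ℕ → NatSeqPartition) : Prop :=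
  seq 0 = coreOf ℓ lam ∧ seq N = lam ∧
  ∀ t, t < N → ∃ i k, IsRowStep ℓ (seq t) (seq (t + 1)) i k

/-- Left-to-right order on a column-addition sequence: for `1 ≤ r < s ≤ N` the content of the
initial node of the `r`-th strip is strictly greater than the content of the final node of the
`s`-th strip. -/
def LeftToRight (N : ℕ) (seq : ℕ → NatSeqPartition) : Prop :=
  ∀ r s, 1 ≤ r → r < s → s ≤ N → ∀ x y,
    IsMaxContentNode (seq (r - 1)) (seq r) x →
    IsMinContentNode (seq (s - 1)) (seq s) y →
    y.2 - y.1 < x.2 - x.1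

/-- Right-to-left order on a row-addition sequence: for `1 ≤ r < s ≤ N` the content of the
final node of the `r`-th strip is strictly less than the content of the final node of the
`s`-th strip. -/
def RightToLeft (N : ℕ) (seq : ℕ → NatSeqPartition) : Prop :=
  ∀ r s, 1 ≤ r → r < s → s ≤ N → ∀ x y,
    IsMinContentNode (seq (r - 1)) (seq r) x →
    IsMinContentNode (seq (s - 1)) (seq s) y →
    x.2 - x.1 < y.2 - y.1

/-- `x` is an addable node of `λ`. -/
def Addable (lam : NatSeqPartition) (x : ℤ × ℤ) : Prop :=
  ¬ NatSeqPartition.memYD lam x ∧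
    ∃ mu : NatSeqPartition, ∀ y, NatSeqPartition.memYD mu y ↔ (NatSeqPartition.memYD lam y ∨ y = x)

/-- `x` is a removable node of `λ`. -/
def Removable (lam : NatSeqPartition) (x : ℤ × ℤ) : Prop :=
  NatSeqPartition.memYD lam x ∧
    ∃ mu : NatSeqPartition, ∀ y, NatSeqPartition.memYD mu y ↔ (NatSeqPartition.memYD lam y ∧ y ≠ x)

end Wreath

/-!
The number of `+1`s of `m(λ)` at positions `≥ d` equals the number of nodes of `λ` of content `d`
plus `max(-d, 0)`. Hence the number of nodes of `μ∖λ` of content `d` drops by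
`(m(μ)(d) - m(λ)(d)) / 2` from `d` to `d + 1`, and vanishes for large `d`. So `m(μ)` arises from
`m(λ)` by moving one `+1` from `c - 1` to `c + s - 1` exactly when `μ∖λ` has one node on each
diagonal `c, …, c + s - 1` and no other node. For a skew shape, at most one node per diagonal means
no 2×2 block (skew shapes are convex), and occupying an interval of diagonals means connectedness
(a node whose next diagonal is occupied has its lower or its left neighbour in `μ∖λ`).
-/

lemma Set.bijOn_iff_ncard_fiber_eq_indicator {α β : Type*} {f : α → β} {S : Set α} {T : Set β}
    (hS : S.Finite) : Set.BijOn f S T ↔ (fun b => {a | a ∈ S ∧ f a = b}.ncard) = T.indicator 1 := by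
  have hfin : ∀ b, {a | a ∈ S ∧ f a = b}.Finite := fun b => hS.subset fun _ h => h.1
  constructor
  · intro h
    funext b
    by_cases hb : b ∈ T
    · rw [Set.indicator_of_mem hb, Pi.one_apply, Set.ncard_eq_one]
      obtain ⟨a, ha, rfl⟩ := h.surjOn hb
      exact ⟨a, Set.ext fun a' => ⟨fun h' => h.injOn h'.1 ha h'.2, by rintro rfl; exact ⟨ha, rfl⟩⟩⟩
    · rw [Set.indicator_of_notMem hb, Set.ncard_eq_zero (hfin b)]
      exact Set.eq_empty_of_forall_notMem fun a ha => hb (ha.2 ▸ h.mapsTo ha.1)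
  · intro h
    have hfib : ∀ b, {a | a ∈ S ∧ f a = b}.ncard = T.indicator 1 b := congrFun h
    refine ⟨fun a ha => ?_, fun a ha a' ha' heq => ?_, fun b hb => ?_⟩
    · by_contra hT
      have hempty := hfib (f a)
      rw [Set.indicator_of_notMem hT, Set.ncard_eq_zero (hfin _)] at hempty
      exact hempty.subset ⟨ha, rfl⟩
    · have hle : {a' | a' ∈ S ∧ f a' = f a}.ncard ≤ 1 := by
        rw [hfib]
        by_cases hT : f a ∈ T <;> simp [hT]
      exact (Set.ncard_le_one (hfin _)).mp hle a ⟨ha, rfl⟩ a' ⟨ha', heq.symm⟩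
    · obtain ⟨a, ha, hfa⟩ := Set.nonempty_of_ncard_ne_zero (s := {a | a ∈ S ∧ f a = b})
        (by simp [hfib, hb])
      exact ⟨a, ha, hfa⟩

namespace Wreath

def content (x : ℤ × ℤ) : ℤ := x.2 - x.1

lemma setOf_le_part_finite (lam : NatSeqPartition) {a : ℕ} (ha : 1 ≤ a) :
    {k | a ≤ lam.part k}.Finite := by
  obtain ⟨N, hN⟩ := lam.eventually_zero
  refine (Set.finite_Iio N).subset fun k hk => ?_
  by_contra hkN
  have := hN k (not_lt.mp hkN)
  have : a ≤ lam.part k := hk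
  omega

lemma setOf_le_part_eq_Iio (lam : NatSeqPartition) {a : ℕ} (ha : 1 ≤ a) :
    {k | a ≤ lam.part k} = Set.Iio (conj lam a) := by
  have hlower : IsLowerSet {k | a ≤ lam.part k} :=
    fun m n hnm hm => le_trans hm (lam.antitone n m hnm)
  obtain huniv | ⟨n, hn⟩ := hlower.eq_univ_or_Iio
  · exact absurd (huniv ▸ setOf_le_part_finite lam ha) Set.infinite_univ
  · rw [conj, hn, Set.ncard_Iio_nat]

lemma le_part_iff_lt_conj (lam : NatSeqPartition) {a : ℕ} (ha : 1 ≤ a) (b : ℕ) :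
    a ≤ lam.part b ↔ b < conj lam a :=
  Set.ext_iff.mp (setOf_le_part_eq_Iio lam ha) b

lemma conj_le_conj (lam : NatSeqPartition) {a a' : ℕ} (ha : 1 ≤ a) (h : a ≤ a') :
    conj lam a' ≤ conj lam a :=
  Set.ncard_le_ncard (fun _ hk => le_trans h hk) (setOf_le_part_finite lam ha)

lemma memYD_iff_le_conj (lam : NatSeqPartition) (x : ℤ × ℤ) :
    NatSeqPartition.memYD lam x ↔ 1 ≤ x.1 ∧ 1 ≤ x.2 ∧ x.2 ≤ conj lam x.1.toNat := by
  refine and_congr_right fun h1 => and_congr_right fun h2 => ?_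
  have := le_part_iff_lt_conj lam (a := x.1.toNat) (by omega) (x.2 - 1).toNat
  omega

lemma memYD_of_le (lam : NatSeqPartition) {x y : ℤ × ℤ} (hy : NatSeqPartition.memYD lam y)
    (hx1 : 1 ≤ x.1) (hx2 : 1 ≤ x.2) (hxy : x ≤ y) : NatSeqPartition.memYD lam x := by
  obtain ⟨-, -, hy⟩ := hy
  rw [Prod.le_def] at hxy
  have : lam.part (y.2 - 1).toNat ≤ lam.part (x.2 - 1).toNat := lam.antitone _ _ (by omega)
  exact ⟨hx1, hx2, by omega⟩

lemma setOf_memYD_finite (lam : NatSeqPartition) : {x | NatSeqPartition.memYD lam x}.Finite := by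
  obtain ⟨N, hN⟩ := lam.eventually_zero
  refine (Set.finite_Icc ((1 : ℤ), (1 : ℤ)) ((lam.part 0 : ℤ), (N : ℤ))).subset ?_
  rintro ⟨p, q⟩ ⟨h1, h2, h3⟩
  have hp : lam.part (q - 1).toNat ≤ lam.part 0 := lam.antitone 0 _ (Nat.zero_le _)
  have hq : q ≤ N := by
    by_contra hq
    have := hN (q - 1).toNat (by omega)
    simp only at h3
    omega
  simp only [Set.mem_Icc, Prod.mk_le_mk] at h3 ⊢
  omega

noncomputable def beta (lam : NatSeqPartition) (a : ℕ) : ℤ := conj lam (a + 1) - (a + 1)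

lemma beta_strictAnti (lam : NatSeqPartition) : StrictAnti (beta lam) :=
  strictAnti_nat_of_succ_lt fun n => by
    have := conj_le_conj lam (a := n + 1) (a' := n + 2) (by omega) (by omega)
    simp only [beta, show n + 1 + 1 = n + 2 from rfl]
    push_cast
    omega

lemma beta_le (lam : NatSeqPartition) (a : ℕ) : beta lam a ≤ conj lam 1 - (a + 1) := by
  have := conj_le_conj lam (a := 1) (a' := a + 1) le_rfl (by omega)
  simp only [beta]
  omega

lemma mayaFun_eq_one_iff (lam : NatSeqPartition) (j : ℤ) :
    mayaFun lam j = 1 ↔ j ∈ Set.range (beta lam) := by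
  simp only [mayaFun, Set.mem_range, beta, eq_comm (b := j)]
  split_ifs with h <;> simp [h]

lemma mayaFun_eq_one_or_neg_one (lam : NatSeqPartition) (j : ℤ) :
    mayaFun lam j = 1 ∨ mayaFun lam j = -1 := by
  unfold mayaFun
  split_ifs <;> simp

noncomputable def betaCountGe (lam : NatSeqPartition) (d : ℤ) : ℕ := {a : ℕ | d ≤ beta lam a}.ncard

lemma setOf_le_beta_finite (lam : NatSeqPartition) (d : ℤ) : {a : ℕ | d ≤ beta lam a}.Finite :=
  (Set.finite_Iio (conj lam 1 - d).toNat).subset fun a ha => by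
    have : d ≤ beta lam a := ha
    have := beta_le lam a
    simp only [Set.mem_Iio]
    omega

lemma two_mul_betaCountGe (lam : NatSeqPartition) (d : ℤ) :
    2 * (betaCountGe lam d : ℤ) = 2 * betaCountGe lam (d + 1) + mayaFun lam d + 1 := by
  rcases mayaFun_eq_one_or_neg_one lam d with h | h
  · obtain ⟨a₀, ha₀⟩ := (mayaFun_eq_one_iff lam d).mp h
    have hset : {a : ℕ | d ≤ beta lam a} = insert a₀ {a : ℕ | d + 1 ≤ beta lam a} := by
      ext a
      simp only [Set.mem_ofPred_eq, Set.mem_insert_iff]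
      refine ⟨fun had => ?_, ?_⟩
      · rcases had.eq_or_lt with heq | hlt
        · exact .inl ((beta_strictAnti lam).injective (ha₀.trans heq)).symm
        · exact .inr hlt
      · rintro (rfl | had) <;> omega
    have hnotMem : a₀ ∉ {a : ℕ | d + 1 ≤ beta lam a} := fun h => by
      have : d + 1 ≤ beta lam a₀ := h
      omega
    rw [betaCountGe, hset, Set.ncard_insert_of_notMem hnotMem (setOf_le_beta_finite lam _), h,
      betaCountGe]
    push_cast
    ring
  · have hd : d ∉ Set.range (beta lam) := fun hd => by
      rw [← mayaFun_eq_one_iff] at hd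
      omega
    have hset : {a : ℕ | d ≤ beta lam a} = {a : ℕ | d + 1 ≤ beta lam a} := by
      ext a
      simp only [Set.mem_ofPred_eq]
      refine ⟨fun had => had.lt_of_ne fun heq => hd ⟨a, heq.symm⟩, fun had => by omega⟩
    rw [betaCountGe, hset, h, betaCountGe]
    ring

lemma betaCountGe_eq_zero (lam : NatSeqPartition) {d : ℤ} (hd : conj lam 1 ≤ d) :
    betaCountGe lam d = 0 := by
  rw [betaCountGe, Set.ncard_eq_zero (setOf_le_beta_finite lam d)]
  ext a
  have := beta_le lam a
  simp only [Set.mem_ofPred_eq, Set.mem_empty_iff_false, iff_false, not_le]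
  omega

noncomputable def diagCount (lam : NatSeqPartition) (d : ℤ) : ℕ :=
  {x | NatSeqPartition.memYD lam x ∧ content x = d}.ncard

lemma setOf_diag_eq_image (lam : NatSeqPartition) (d : ℤ) :
    {x | NatSeqPartition.memYD lam x ∧ content x = d} =
      (fun a : ℕ => ((a : ℤ) + 1, (a : ℤ) + 1 + d)) '' {a : ℕ | -d ≤ a ∧ d ≤ beta lam a} := by
  ext ⟨p, q⟩
  simp only [Set.mem_ofPred_eq, Set.mem_image, memYD_iff_le_conj, content, beta, Prod.mk.injEq]
  constructor
  · rintro ⟨⟨hp, hq, hconj⟩, rfl⟩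
    refine ⟨(p - 1).toNat, ⟨by omega, ?_⟩, by omega, by omega⟩
    rw [show (p - 1).toNat + 1 = p.toNat by omega, show ((p - 1).toNat : ℤ) + 1 = p by omega]
    omega
  · rintro ⟨a, ⟨ha, hbeta⟩, rfl, rfl⟩
    rw [show ((a : ℤ) + 1).toNat = a + 1 by omega]
    omega

/-- Every `a < -d` is counted on the left because `ᵗλ_{a+1} ≥ 0`; the remaining `a` are the
columns `a + 1` of the nodes of `λ` of content `d`. -/
lemma betaCountGe_eq_diagCount_add (lam : NatSeqPartition) (d : ℤ) :
    betaCountGe lam d = diagCount lam d + (-d).toNat := by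
  have hunion : {a : ℕ | d ≤ beta lam a} =
      {a : ℕ | -d ≤ a ∧ d ≤ beta lam a} ∪ Set.Iio (-d).toNat := by
    ext a
    simp only [Set.mem_ofPred_eq, Set.mem_union, Set.mem_Iio, beta]
    omega
  have hdisj : Disjoint {a : ℕ | -d ≤ a ∧ d ≤ beta lam a} (Set.Iio (-d).toNat) :=
    Set.disjoint_left.mpr fun a ha hlt => by
      have : -d ≤ a := ha.1
      simp only [Set.mem_Iio] at hlt
      omega
  have hinj : Function.Injective fun a : ℕ => ((a : ℤ) + 1, (a : ℤ) + 1 + d) :=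
    fun a b hab => by simp_all
  rw [betaCountGe, hunion, Set.ncard_union_eq hdisj
      ((setOf_le_beta_finite lam d).subset fun _ ha => ha.2), diagCount, setOf_diag_eq_image,
    hinj.injOn.ncard_image, Set.ncard_Iio_nat]

lemma setOf_skewMem_finite (lam mu : NatSeqPartition) : {x | SkewMem lam mu x}.Finite :=
  (setOf_memYD_finite mu).subset fun _ hx => hx.1

noncomputable def skewDiagCount (lam mu : NatSeqPartition) (d : ℤ) : ℕ :=
  {x | SkewMem lam mu x ∧ content x = d}.ncard

def IsBeadMove (lam mu : NatSeqPartition) (i j : ℤ) : Prop :=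
  mayaFun lam i = 1 ∧ mayaFun lam j = -1 ∧ mayaFun mu i = -1 ∧ mayaFun mu j = 1 ∧
    ∀ k, k ≠ i → k ≠ j → mayaFun mu k = mayaFun lam k

def SkewAdj (lam mu : NatSeqPartition) (u v : ℤ × ℤ) : Prop :=
  SkewMem lam mu u ∧ SkewMem lam mu v ∧ adjacent u v

section

variable {lam mu : NatSeqPartition}

lemma diagCount_eq_add_skewDiagCount (hsub : Sub lam mu) (d : ℤ) :
    diagCount mu d = diagCount lam d + skewDiagCount lam mu d := by
  have hsubset : {x | NatSeqPartition.memYD lam x ∧ content x = d} ⊆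
      {x | NatSeqPartition.memYD mu x ∧ content x = d} :=
    fun x hx => ⟨hsub x hx.1, hx.2⟩
  have hdiff : {x | SkewMem lam mu x ∧ content x = d} =
      {x | NatSeqPartition.memYD mu x ∧ content x = d} \
        {x | NatSeqPartition.memYD lam x ∧ content x = d} := by
    ext x
    simp only [SkewMem, Set.mem_ofPred_eq, Set.mem_sdiff]
    tauto
  rw [diagCount, diagCount, skewDiagCount, hdiff, add_comm,
    Set.ncard_sdiff_add_ncard_of_subset hsubset ((setOf_memYD_finite mu).subset fun _ hx => hx.1)]

lemma two_mul_skewDiagCount (hsub : Sub lam mu) (d : ℤ) :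
    2 * (skewDiagCount lam mu d : ℤ) =
      2 * skewDiagCount lam mu (d + 1) + mayaFun mu d - mayaFun lam d := by
  have hlam := two_mul_betaCountGe lam d
  have hmu := two_mul_betaCountGe mu d
  simp only [betaCountGe_eq_diagCount_add, diagCount_eq_add_skewDiagCount hsub] at hlam hmu
  push_cast at hlam hmu
  linarith

lemma skewDiagCount_eq_zero (hsub : Sub lam mu) {d : ℤ} (hd : conj mu 1 ≤ d) :
    skewDiagCount lam mu d = 0 := by
  have := betaCountGe_eq_zero mu hd
  rw [betaCountGe_eq_diagCount_add, diagCount_eq_add_skewDiagCount hsub] at this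
  omega

lemma IsBeadMove.ne {i j : ℤ} (h : IsBeadMove lam mu i j) : i ≠ j := by
  rintro rfl
  have := h.1.symm.trans h.2.1
  norm_num at this

/-- Twice either side drops by `mayaFun mu d - mayaFun lam d` from `d` to `d + 1`, and both sides
vanish for large `d`. -/
lemma IsBeadMove.skewDiagCount_eq (hsub : Sub lam mu) {i j : ℤ} (hij : i < j)
    (h : IsBeadMove lam mu i j) : skewDiagCount lam mu = (Set.Ioc i j).indicator 1 := by
  obtain ⟨hlam_i, hlam_j, hmu_i, hmu_j, hrest⟩ := h
  set g : ℤ → ℤ := fun d => skewDiagCount lam mu d - if i < d ∧ d ≤ j then 1 else 0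
  have hg : Function.Periodic g 1 := fun d => by
    have hrec := two_mul_skewDiagCount hsub d
    simp only [g]
    by_cases hdi : d = i
    · subst hdi; split_ifs <;> omega
    by_cases hdj : d = j
    · subst hdj; split_ifs <;> omega
    have := hrest d hdi hdj
    split_ifs <;> omega
  have hfar : g (max (conj mu 1) (j + 1)) = 0 := by
    simp only [g, skewDiagCount_eq_zero hsub (le_max_left _ _)]
    split_ifs <;> omega
  have hg_zero : ∀ d, g d = 0 := fun d => by
    have h₁ := hg.int_mul_eq d
    have h₂ := hg.int_mul_eq (max (conj mu 1) (j + 1))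
    simp only [mul_one, Int.cast_id] at h₁ h₂
    rw [h₁, ← h₂, hfar]
  funext d
  have := hg_zero d
  simp only [g, Set.indicator_apply, Set.mem_Ioc, Pi.one_apply] at this ⊢
  split_ifs at this ⊢ <;> omega

lemma isBeadMove_of_skewDiagCount_eq (hsub : Sub lam mu) {i j : ℤ} (hij : i < j)
    (hK : skewDiagCount lam mu = (Set.Ioc i j).indicator 1) : IsBeadMove lam mu i j := by
  have hpm : ∀ k, (mayaFun lam k = 1 ∨ mayaFun lam k = -1) ∧
      (mayaFun mu k = 1 ∨ mayaFun mu k = -1) ∧ mayaFun mu k - mayaFun lam k =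
        2 * ((if i < k ∧ k ≤ j then 1 else 0) - if i < k + 1 ∧ k + 1 ≤ j then 1 else 0) := by
    refine fun k => ⟨mayaFun_eq_one_or_neg_one lam k, mayaFun_eq_one_or_neg_one mu k, ?_⟩
    have := two_mul_skewDiagCount hsub k
    simp only [hK, Set.indicator_apply, Set.mem_Ioc, Pi.one_apply] at this
    split_ifs at this ⊢ <;> push_cast at this <;> omega
  have hi := hpm i
  have hj := hpm j
  rw [if_neg (by omega), if_pos (by omega)] at hi
  rw [if_pos (by omega), if_neg (by omega)] at hj
  refine ⟨by omega, by omega, by omega, by omega, fun k hki hkj => ?_⟩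
  have hk := hpm k
  split_ifs at hk <;> omega

lemma skewMem_of_le_of_le {x y z : ℤ × ℤ} (hx : SkewMem lam mu x) (hy : SkewMem lam mu y)
    (hxz : x ≤ z) (hzy : z ≤ y) : SkewMem lam mu z := by
  have h1 : 1 ≤ z.1 := hx.1.1.trans hxz.1
  have h2 : 1 ≤ z.2 := hx.1.2.1.trans hxz.2
  exact ⟨memYD_of_le mu hy.1 h1 h2 hzy, fun hz => hx.2 (memYD_of_le lam hz hx.1.1 hx.1.2.1 hxz)⟩

/-- A skew shape is convex, so two of its nodes on one diagonal span a 2×2 block inside it. -/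
lemma injOn_content_of_not_exists_square
    (hsq : ¬ ∃ a b : ℤ, SkewMem lam mu (a, b) ∧ SkewMem lam mu (a + 1, b) ∧
      SkewMem lam mu (a, b + 1) ∧ SkewMem lam mu (a + 1, b + 1)) :
    Set.InjOn content {x | SkewMem lam mu x} := by
  have hlt : ∀ x y, SkewMem lam mu x → SkewMem lam mu y → content x = content y → ¬ x.1 < y.1 := by
    intro x y hx hy hc hxy
    simp only [content] at hc
    have hblock : ∀ p q, x.1 ≤ p → p ≤ x.1 + 1 → x.2 ≤ q → q ≤ x.2 + 1 → SkewMem lam mu (p, q) :=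
      fun p q h1 h2 h3 h4 => skewMem_of_le_of_le hx hy (Prod.le_def.mpr ⟨h1, h3⟩)
        (Prod.le_def.mpr ⟨by omega, by omega⟩)
    exact hsq ⟨x.1, x.2, hblock _ _ le_rfl (by omega) le_rfl (by omega),
      hblock _ _ (by omega) le_rfl le_rfl (by omega),
      hblock _ _ le_rfl (by omega) (by omega) le_rfl, hblock _ _ (by omega) le_rfl (by omega) le_rfl⟩
  intro x hx y hy hc
  have h₁ := hlt x y hx hy hc
  have h₂ := hlt y x hy hx hc.symm
  simp only [content] at hc
  exact Prod.ext (by omega) (by omega)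

lemma content_eq_or_eq_of_adjacent {u v : ℤ × ℤ} (h : adjacent u v) :
    content v = content u + 1 ∨ content u = content v + 1 := by
  simp only [content]
  rcases h with ⟨_, _ | _⟩ | ⟨_, _ | _⟩ <;> omega

lemma exists_skewMem_content_eq_of_reflTransGen {x y : ℤ × ℤ}
    (h : Relation.ReflTransGen (SkewAdj lam mu) x y)
    (hx : SkewMem lam mu x) {e : ℤ} (hxe : content x ≤ e) (hey : e ≤ content y) :
    ∃ z, SkewMem lam mu z ∧ content z = e := by
  induction h with
  | refl => exact ⟨x, hx, by omega⟩
  | @tail v w _ hvw ih =>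
    by_cases hev : e ≤ content v
    · exact ih hev
    · rcases content_eq_or_eq_of_adjacent hvw.2.2 with hc | hc
      · exact ⟨w, hvw.2.1, by omega⟩
      · omega

lemma IsBorderStrip.exists_bijOn_content (h : IsBorderStrip lam mu) :
    ∃ i j, i < j ∧ Set.BijOn content {x | SkewMem lam mu x} (Set.Ioc i j) := by
  obtain ⟨-, hne, hconn, hsq⟩ := h
  obtain ⟨xlo, hxlo, hmin⟩ :=
    Set.exists_min_image _ content (setOf_skewMem_finite lam mu) hne
  obtain ⟨xhi, hxhi, hmax⟩ :=
    Set.exists_max_image _ content (setOf_skewMem_finite lam mu) hne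
  refine ⟨content xlo - 1, content xhi, by linarith [hmin xhi hxhi], fun x hx => ?_,
    injOn_content_of_not_exists_square hsq, fun e he => ?_⟩
  · exact ⟨by linarith [hmin x hx], hmax x hx⟩
  · obtain ⟨z, hz, rfl⟩ := exists_skewMem_content_eq_of_reflTransGen (hconn xlo xhi hxlo hxhi)
      hxlo (by linarith [he.1]) he.2
    exact ⟨z, hz, rfl⟩

/-- Otherwise `μ` would stop before the row below `(a, b)` and `λ` would contain `(a - 1, b)`,
leaving no room for `y` on the next diagonal. -/
lemma skewMem_below_or_left {a b : ℤ} {y : ℤ × ℤ} (hx : SkewMem lam mu (a, b))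
    (hy : SkewMem lam mu y) (hc : content y = content (a, b) + 1) :
    SkewMem lam mu (a, b + 1) ∨ SkewMem lam mu (a - 1, b) := by
  by_contra hcon
  obtain ⟨hbelow, hleft⟩ := not_or.mp hcon
  have ha : 1 ≤ a := hx.1.1
  have hb : 1 ≤ b := hx.1.2.1
  have hy1 : 1 ≤ y.1 := hy.1.1
  have hy2 : 1 ≤ y.2 := hy.1.2.1
  simp only [content] at hc
  rcases le_or_gt (b + 1) y.2 with hrow | hrow
  · have hmu : NatSeqPartition.memYD mu (a, b + 1) :=
      memYD_of_le mu hy.1 ha (by omega) (Prod.le_def.mpr ⟨by simp only; omega, hrow⟩)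
    have hlam : ¬ NatSeqPartition.memYD lam (a, b + 1) := fun hlam =>
      hx.2 (memYD_of_le lam hlam ha hb (Prod.mk_le_mk.mpr ⟨le_rfl, by omega⟩))
    exact hbelow ⟨hmu, hlam⟩
  · have hmu : NatSeqPartition.memYD mu (a - 1, b) :=
      memYD_of_le mu hx.1 (by simp only; omega) hb (Prod.mk_le_mk.mpr ⟨by omega, le_rfl⟩)
    have hlam : NatSeqPartition.memYD lam (a - 1, b) := not_not.mp fun hlam => hleft ⟨hmu, hlam⟩
    exact hy.2 (memYD_of_le lam hlam hy1 hy2 (Prod.le_def.mpr ⟨by simp only; omega, by omega⟩))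

lemma adjacent.symm {u v : ℤ × ℤ} (h : adjacent u v) : adjacent v u := by
  unfold adjacent at *
  omega

lemma reflTransGen_of_bijOn_content {i j : ℤ}
    (h : Set.BijOn content {x | SkewMem lam mu x} (Set.Ioc i j)) {x y : ℤ × ℤ}
    (hx : SkewMem lam mu x) (hy : SkewMem lam mu y) (hxy : content x ≤ content y) :
    Relation.ReflTransGen (SkewAdj lam mu) x y := by
  obtain ⟨n, hn⟩ : ∃ n : ℕ, content y = content x + n := ⟨(content y - content x).toNat, by omega⟩
  induction n generalizing x with
  | zero => rw [h.injOn hx hy (by simpa using hn.symm)]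
  | succ n ih =>
    have hxi := (h.mapsTo hx).1
    have hyj := (h.mapsTo hy).2
    obtain ⟨w, hw, hwc⟩ := h.surjOn (show content x + 1 ∈ Set.Ioc i j from ⟨by omega, by omega⟩)
    have hstep : ∀ z, SkewMem lam mu z → adjacent x z → content z = content x + 1 →
        Relation.ReflTransGen (SkewAdj lam mu) x y :=
      fun z hz hxz hzc => .head ⟨hx, hz, hxz⟩ (ih hz (by omega) (by push_cast at hn; omega))
    rcases skewMem_below_or_left hx hw hwc with hz | hz
    · exact hstep _ hz (.inl ⟨rfl, .inr rfl⟩) (by simp only [content]; omega)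
    · exact hstep _ hz (.inr ⟨rfl, .inl (by simp)⟩) (by simp only [content]; omega)

lemma isBorderStrip_of_bijOn_content (hsub : Sub lam mu) {i j : ℤ} (hij : i < j)
    (h : Set.BijOn content {x | SkewMem lam mu x} (Set.Ioc i j)) : IsBorderStrip lam mu := by
  refine ⟨hsub, ?_, fun x y hx hy => ?_, ?_⟩
  · obtain ⟨x, hx, -⟩ := h.surjOn (show i + 1 ∈ Set.Ioc i j from ⟨by omega, by omega⟩)
    exact ⟨x, hx⟩
  · rcases le_total (content x) (content y) with hxy | hyx
    · exact reflTransGen_of_bijOn_content h hx hy hxy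
    · refine Relation.ReflTransGen.mono (fun u v huv => ⟨huv.2.1, huv.1, huv.2.2.symm⟩) _ _
        (Relation.reflTransGen_swap.mpr (reflTransGen_of_bijOn_content h hy hx hyx))
  · rintro ⟨a, b, hab, -, -, hab'⟩
    have := h.injOn hab hab' (by simp only [content]; ring)
    simp only [Prod.mk.injEq] at this
    omega

lemma skewSize_eq_of_bijOn_content {i j : ℤ}
    (h : Set.BijOn content {x | SkewMem lam mu x} (Set.Ioc i j)) :
    skewSize lam mu = (j - i).toNat := by
  rw [skewSize, h.ncard_eq, ← Finset.coe_Ioc, Set.ncard_coe_finset, Int.card_Ioc]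

lemma isBeadMove_iff_bijOn_content (hsub : Sub lam mu) {i j : ℤ} (hij : i < j) :
    IsBeadMove lam mu i j ↔ Set.BijOn content {x | SkewMem lam mu x} (Set.Ioc i j) := by
  rw [Set.bijOn_iff_ncard_fiber_eq_indicator (setOf_skewMem_finite lam mu)]
  exact ⟨fun h => h.skewDiagCount_eq hsub hij, isBeadMove_of_skewDiagCount_eq hsub hij⟩

end

end Wreath

open Wreath

theorem border_strip_maya_general (lam mu : NatSeqPartition) (hsub : Sub lam mu) (s : ℕ) :
    ((IsBorderStrip lam mu ∧ skewSize lam mu = s) ↔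
      ∃ c : ℤ, mayaFun lam (c - 1) = 1 ∧ mayaFun lam (c + (s : ℤ) - 1) = -1 ∧
        mayaFun mu (c - 1) = -1 ∧ mayaFun mu (c + (s : ℤ) - 1) = 1 ∧
        ∀ j : ℤ, j ≠ c - 1 → j ≠ c + (s : ℤ) - 1 → mayaFun mu j = mayaFun lam j) ∧
    (∀ c : ℤ,
      (mayaFun lam (c - 1) = 1 ∧ mayaFun lam (c + (s : ℤ) - 1) = -1 ∧
        mayaFun mu (c - 1) = -1 ∧ mayaFun mu (c + (s : ℤ) - 1) = 1 ∧
        ∀ j : ℤ, j ≠ c - 1 → j ≠ c + (s : ℤ) - 1 → mayaFun mu j = mayaFun lam j) →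
      (∀ d : ℤ, (c ≤ d ∧ d < c + (s : ℤ)) ↔ ∃ x, SkewMem lam mu x ∧ x.2 - x.1 = d) ∧
      (∀ x y, SkewMem lam mu x → SkewMem lam mu y → x.2 - x.1 = y.2 - y.1 → x = y)) := by
  have hbij : ∀ c : ℤ, IsBeadMove lam mu (c - 1) (c + s - 1) →
      c - 1 < c + s - 1 ∧ Set.BijOn content {x | SkewMem lam mu x} (Set.Ioc (c - 1) (c + s - 1)) :=
    fun c h => by
      have hlt : c - 1 < c + s - 1 := by have := h.ne; omega
      exact ⟨hlt, (isBeadMove_iff_bijOn_content hsub hlt).mp h⟩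
  refine ⟨⟨fun ⟨hbs, hsz⟩ => ?_, fun ⟨c, hc⟩ => ?_⟩, fun c hc => ?_⟩
  · obtain ⟨i, j, hij, hb⟩ := hbs.exists_bijOn_content
    have hj : j = i + 1 + s - 1 := by have := skewSize_eq_of_bijOn_content hb; omega
    refine ⟨i + 1, ?_⟩
    rw [show i + 1 - 1 = i by ring, ← hj]
    exact (isBeadMove_iff_bijOn_content hsub hij).mpr hb
  · obtain ⟨hlt, hb⟩ := hbij c hc
    exact ⟨isBorderStrip_of_bijOn_content hsub hlt hb, by
      rw [skewSize_eq_of_bijOn_content hb]; omega⟩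
  · obtain ⟨-, hb⟩ := hbij c hc
    refine ⟨fun d => ⟨fun hd => ?_, fun ⟨x, hx, hxd⟩ => ?_⟩, fun x y hx hy => hb.injOn hx hy⟩
    · obtain ⟨x, hx, hxd⟩ := hb.surjOn (show d ∈ Set.Ioc (c - 1) (c + s - 1) from
        ⟨by omega, by omega⟩)
      exact ⟨x, hx, hxd⟩
    · have := (hb.mapsTo hx)
      simp only [Set.mem_Ioc, content, hxd] at this
      omega

theorem border_strip_maya (lam mu : NatSeqPartition) (hsub : Sub lam mu) (s : ℕ) (hs : 1 ≤ s) :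
    ((IsBorderStrip lam mu ∧ skewSize lam mu = s) ↔
      ∃ c : ℤ, mayaFun lam (c - 1) = 1 ∧ mayaFun lam (c + (s : ℤ) - 1) = -1 ∧
        mayaFun mu (c - 1) = -1 ∧ mayaFun mu (c + (s : ℤ) - 1) = 1 ∧
        ∀ j : ℤ, j ≠ c - 1 → j ≠ c + (s : ℤ) - 1 → mayaFun mu j = mayaFun lam j) ∧
    (∀ c : ℤ,
      (mayaFun lam (c - 1) = 1 ∧ mayaFun lam (c + (s : ℤ) - 1) = -1 ∧
        mayaFun mu (c - 1) = -1 ∧ mayaFun mu (c + (s : ℤ) - 1) = 1 ∧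
        ∀ j : ℤ, j ≠ c - 1 → j ≠ c + (s : ℤ) - 1 → mayaFun mu j = mayaFun lam j) →
      (∀ d : ℤ, (c ≤ d ∧ d < c + (s : ℤ)) ↔ ∃ x, SkewMem lam mu x ∧ x.2 - x.1 = d) ∧
      (∀ x y, SkewMem lam mu x → SkewMem lam mu y → x.2 - x.1 = y.2 - y.1 → x = y)) :=
  border_strip_maya_general lam mu hsub s
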